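/- For every g ∈ G and h ∈ H, the composition h∘g⁻¹ belongs to H, with ‖h∘g⁻¹‖ ≤ ‖h‖ + ‖supp(g)‖; the map (g,h) ↦ h∘g⁻¹ is an action of G on H by group automorphisms of H; and this action G×H → H is continuous with respect to the metric d on G and the metric d_H on H. -/

import Mathlib

open scoped ENNReal

/-- The weight of a point `(i,j) ∈ ℕ × ℕ`: `2 · 3^{-(i+1)}`. -/
noncomputable def wt (p : ℕ × ℕ) : ℝ≥0∞ := 2 * ((3 : ℝ≥0∞) ^ (p.1 + 1))⁻¹

/-- `‖S‖ = Σ_{(i,j) ∈ S} 2 · 3^{-(i+1)} ∈ [0,∞]` for `S ⊆ ℕ × ℕ`. -/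
noncomputable def nrmS (S : Set (ℕ × ℕ)) : ℝ≥0∞ := ∑' p, S.indicator wt p

lemma nrmS_mono {S T : Set (ℕ × ℕ)} (h : S ⊆ T) : nrmS S ≤ nrmS T :=
  ENNReal.tsum_le_tsum fun p =>
    Set.indicator_le_indicator_of_subset h (fun _ => zero_le) p

lemma nrmS_union_le (S T : Set (ℕ × ℕ)) : nrmS (S ∪ T) ≤ nrmS S + nrmS T := by
  rw [nrmS, nrmS, nrmS, ← ENNReal.tsum_add]
  refine ENNReal.tsum_le_tsum fun p => ?_
  by_cases hS : p ∈ S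
  · refine le_trans ?_ (le_add_right le_rfl)
    rw [Set.indicator_of_mem (Set.mem_union_left _ hS), Set.indicator_of_mem hS]
  · by_cases hT : p ∈ T
    · refine le_trans ?_ (le_add_left le_rfl)
      rw [Set.indicator_of_mem (Set.mem_union_right _ hT), Set.indicator_of_mem hT]
    · rw [Set.indicator_of_notMem (fun hc => hc.elim hS hT)]
      exact zero_le

lemma nrmS_empty : nrmS ∅ = 0 := by simp [nrmS]

/-- The support of `z : ℕ × ℕ → ZMod 2`. -/
def suppZ (z : ℕ × ℕ → ZMod 2) : Set (ℕ × ℕ) := {p | z p = 1}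

/-- `‖z‖` for `z : ℕ × ℕ → ZMod 2`. -/
noncomputable def nrmZ (z : ℕ × ℕ → ZMod 2) : ℝ≥0∞ := nrmS (suppZ z)

/-- `H = {z : ℕ × ℕ → ZMod 2 | ‖z‖ < ∞}`, as an (additive) subgroup of the product group
`ℕ × ℕ → ZMod 2` with pointwise addition mod 2. -/
noncomputable def Hgrp : AddSubgroup ((ℕ × ℕ) → ZMod 2) where
  carrier := {z | nrmZ z < ⊤}
  zero_mem' := by
    have h : suppZ 0 = ∅ := by ext p; simp [suppZ]
    simp [nrmZ, h, nrmS_empty]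
  add_mem' {z w} hz hw := by
    have hsub : suppZ (z + w) ⊆ suppZ z ∪ suppZ w := by
      intro p hp
      by_contra hc
      simp only [Set.mem_union, suppZ, Set.mem_setOf_eq, not_or] at hc
      have hdi : ∀ x : ZMod 2, x = 0 ∨ x = 1 := by decide
      have hz0 : z p = 0 := (hdi (z p)).resolve_right hc.1
      have hw0 : w p = 0 := (hdi (w p)).resolve_right hc.2
      have hp' : (z + w) p = 1 := hp
      rw [Pi.add_apply, hz0, hw0] at hp'
      exact absurd hp' (by decide)
    calc nrmZ (z + w) ≤ nrmS (suppZ z ∪ suppZ w) := nrmS_mono hsub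
      _ ≤ nrmZ z + nrmZ w := nrmS_union_le _ _
      _ < ⊤ := ENNReal.add_lt_top.2 ⟨hz, hw⟩
  neg_mem' {z} hz := by
    have h : suppZ (-z) = suppZ z := by
      ext p; simp [suppZ, CharTwo.neg_eq]
    simpa [nrmZ, h] using hz
/-- `φ(x) = Σ_i 2 · x i · 3^{-(i+1)}`, the standard map from `2^ℕ` onto the ternary Cantor
set (values of `x` read as `0, 1` in `ℝ`). -/
noncomputable def phiC (x : ℕ → ZMod 2) : ℝ :=
  ∑' i, 2 * ((x i).val : ℝ) * ((3 : ℝ) ^ (i + 1))⁻¹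

/-- The metric on `H`: `d_H(z,w) = Σ_j |φ(z(·,j)) − φ(w(·,j))|`, the `ℓ¹`-distance between
the corresponding points of `C^ℕ ∩ ℓ¹`. -/
noncomputable def dH (z w : ↥Hgrp) : ℝ :=
  ∑' j, |phiC (fun i => (z : (ℕ × ℕ) → ZMod 2) (i, j)) -
          phiC (fun i => (w : (ℕ × ℕ) → ZMod 2) (i, j))|

/-- The support of a permutation `g` of `ℕ × ℕ`. -/
def suppP (g : Equiv.Perm (ℕ × ℕ)) : Set (ℕ × ℕ) := {p | g p ≠ p}

lemma suppP_inv (g : Equiv.Perm (ℕ × ℕ)) : suppP g⁻¹ = suppP g := by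
  ext p
  simp only [suppP, Set.mem_setOf_eq, ne_eq]
  constructor
  · intro h hc
    exact h (by conv_lhs => rw [← hc]; rw [Equiv.Perm.inv_def, Equiv.symm_apply_apply] ; )
  · intro h hc
    exact h (by conv_lhs => rw [← hc]; rw [Equiv.Perm.inv_def, Equiv.apply_symm_apply])

/-- `G = {g ∈ Sym(ℕ × ℕ) | ‖supp g‖ < ∞}`, as a subgroup of the symmetric group of
`ℕ × ℕ`. -/
noncomputable def Ggrp : Subgroup (Equiv.Perm (ℕ × ℕ)) where
  carrier := {g | nrmS (suppP g) < ⊤}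
  one_mem' := by
    have h : suppP 1 = ∅ := by ext p; simp [suppP]
    simp [h, nrmS_empty]
  mul_mem' {f g} hf hg := by
    have hsub : suppP (f * g) ⊆ suppP f ∪ suppP g := by
      intro p hp
      by_contra hc
      simp only [Set.mem_union, suppP, Set.mem_setOf_eq, ne_eq, not_or, not_not] at hc
      exact hp (by simp only [suppP, Set.mem_setOf_eq, Equiv.Perm.mul_apply, hc.2, hc.1] at *)
    calc nrmS (suppP (f * g)) ≤ nrmS (suppP f ∪ suppP g) := nrmS_mono hsub
      _ ≤ nrmS (suppP f) + nrmS (suppP g) := nrmS_union_le _ _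
      _ < ⊤ := ENNReal.add_lt_top.2 ⟨hf, hg⟩
  inv_mem' {g} hg := by simpa [suppP_inv] using hg

/-- The metric on `G`: `d(f,g) = ‖supp (f⁻¹ ∘ g)‖`. -/
noncomputable def dG (f g : ↥Ggrp) : ℝ :=
  (nrmS (suppP ((f : Equiv.Perm (ℕ × ℕ))⁻¹ * (g : Equiv.Perm (ℕ × ℕ))))).toReal

/-- The action of `G` on `H`: `g • h = h ∘ g⁻¹`. -/
noncomputable def actGH (g : ↥Ggrp) (h : ↥Hgrp) : ↥Hgrp :=
  ⟨fun p => (h : (ℕ × ℕ) → ZMod 2) (((g : Equiv.Perm (ℕ × ℕ)))⁻¹ p), by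
    have hsub : suppZ (fun p => (h : (ℕ × ℕ) → ZMod 2) (((g : Equiv.Perm (ℕ × ℕ)))⁻¹ p)) ⊆
        suppZ (h : (ℕ × ℕ) → ZMod 2) ∪ suppP (g : Equiv.Perm (ℕ × ℕ)) := by
      intro p hp
      by_cases hgp : ((g : Equiv.Perm (ℕ × ℕ)))⁻¹ p = p
      · left
        have : (h : (ℕ × ℕ) → ZMod 2) (((g : Equiv.Perm (ℕ × ℕ)))⁻¹ p) = 1 := hp
        rwa [hgp] at this
      · right
        have : p ∈ suppP ((g : Equiv.Perm (ℕ × ℕ)))⁻¹ := hgp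
        rwa [suppP_inv] at this
    show nrmZ _ < ⊤
    calc nrmZ _ ≤ nrmS (suppZ (h : (ℕ × ℕ) → ZMod 2) ∪ suppP (g : Equiv.Perm (ℕ × ℕ))) :=
          nrmS_mono hsub
      _ ≤ nrmZ (h : (ℕ × ℕ) → ZMod 2) + nrmS (suppP (g : Equiv.Perm (ℕ × ℕ))) :=
          nrmS_union_le _ _
      _ < ⊤ := ENNReal.add_lt_top.2 ⟨h.2, g.2⟩⟩

/-!
The norm of a column `x = z (·, j)` is exactly `φ x`, and on columns `φ` is bi-Lipschitz for this
norm: `|φ x - φ y| ≤ φ (x + y) ≤ 3 |φ x - φ y|`. The factor `3` appears because the first digit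
`n` where `x` and `y` differ moves `φ` by `2 · 3⁻⁽ⁿ⁺¹⁾`, while all later digits together move it
by at most `3⁻⁽ⁿ⁺¹⁾`. Summing over the columns, `d_H(z, w)` and `‖z + w‖` are comparable.

Since `supp (h ∘ g⁻¹) = g (supp h) ⊆ supp h ∪ supp g`, the norm bound is immediate. For continuity
at `(g, h)` write `g₁ = g k`; then `g • h + g₁ • h₁ = g • (h + k • h₁)`, whose support is the
`g`-image of a set `W ⊆ supp (h + h₁) ∪ supp k` of small norm. A set of small norm lies in the rows
`i ≥ M`, and as `‖supp g‖ < ∞`, for `M` large the points of these rows moved by `g` carry little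
weight after moving, so `‖g W‖ ≤ ‖W‖ + ε`.
-/

open Set

noncomputable def ternWt (i : ℕ) : ℝ := 2 * ((3 : ℝ) ^ (i + 1))⁻¹

lemma ternWt_nonneg (i : ℕ) : 0 ≤ ternWt i := by
  unfold ternWt; positivity

lemma ternWt_eq (i : ℕ) : ternWt i = 2 / 3 * (1 / 3 : ℝ) ^ i := by
  rw [ternWt, pow_succ, mul_inv, one_div, inv_pow]
  ring

lemma summable_ternWt : Summable ternWt :=
  ((summable_geometric_of_lt_one (by norm_num) (by norm_num)).mul_left (2 / 3)).congr
    fun i => (ternWt_eq i).symm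

lemma tsum_ternWt_nat_add (n : ℕ) : ∑' i, ternWt (i + n) = ((3 : ℝ) ^ n)⁻¹ := by
  have h : ∀ i, ternWt (i + n) = 2 / 3 * (1 / 3 : ℝ) ^ n * (1 / 3) ^ i := fun i => by
    rw [ternWt_eq, pow_add]; ring
  rw [tsum_congr h, tsum_mul_left, tsum_geometric_of_lt_one (by norm_num) (by norm_num),
    one_div, inv_pow]
  ring

lemma wt_eq_ofReal_ternWt (p : ℕ × ℕ) : wt p = ENNReal.ofReal (ternWt p.1) := by
  rw [wt, ternWt, ENNReal.ofReal_mul (by norm_num), ENNReal.ofReal_inv_of_pos (by positivity),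
    ENNReal.ofReal_pow (by norm_num)]
  norm_num

lemma abs_tsum_nat_add_le {t : ℕ → ℝ} (ht : ∀ i, |t i| ≤ ternWt i) (n : ℕ) :
    |∑' i, t (i + n)| ≤ ((3 : ℝ) ^ n)⁻¹ := by
  have hsum : Summable fun i => ternWt (i + n) := (summable_nat_add_iff n).2 summable_ternWt
  calc |∑' i, t (i + n)| ≤ ∑' i, ternWt (i + n) :=
        tsum_of_norm_bounded hsum.hasSum fun i => (Real.norm_eq_abs _).trans_le (ht (i + n))
    _ = ((3 : ℝ) ^ n)⁻¹ := tsum_ternWt_nat_add n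

lemma tsum_eq_tsum_nat_add_of_eq_zero {f : ℕ → ℝ} (hf : Summable f) {n : ℕ}
    (h : ∀ i < n, f i = 0) : ∑' i, f i = ∑' i, f (i + n) := by
  rw [← hf.sum_add_tsum_nat_add n, Finset.sum_eq_zero fun i hi => h i (Finset.mem_range.1 hi),
    zero_add]

lemma ZMod.eq_zero_or_eq_one_two (a : ZMod 2) : a = 0 ∨ a = 1 := by
  revert a; decide

lemma ZMod.add_eq_one_iff_ne_two (a b : ZMod 2) : a + b = 1 ↔ a ≠ b := by
  revert a b; decide

lemma ZMod.val_two_le_one (a : ZMod 2) : (a.val : ℝ) ≤ 1 := by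
  exact_mod_cast Nat.lt_succ_iff.1 a.val_lt

lemma ZMod.abs_val_sub_val_two (a b : ZMod 2) : |(a.val : ℝ) - b.val| = ((a + b).val : ℝ) := by
  rcases a.eq_zero_or_eq_one_two with rfl | rfl <;> rcases b.eq_zero_or_eq_one_two with rfl | rfl
  all_goals
    simp only [add_zero, zero_add, show (1 + 1 : ZMod 2) = 0 from rfl, ZMod.val_zero,
      ZMod.val_one]
    norm_num

lemma phiC_eq_tsum (x : ℕ → ZMod 2) : phiC x = ∑' i, (x i).val * ternWt i :=
  tsum_congr fun i => by rw [ternWt]; ring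

lemma summable_val_mul_ternWt (x : ℕ → ZMod 2) : Summable fun i => (x i).val * ternWt i :=
  summable_ternWt.of_nonneg_of_le (fun i => mul_nonneg (Nat.cast_nonneg _) (ternWt_nonneg i))
    fun i => mul_le_of_le_one_left (ternWt_nonneg i) (ZMod.val_two_le_one _)

lemma phiC_nonneg (x : ℕ → ZMod 2) : 0 ≤ phiC x := by
  rw [phiC_eq_tsum]; exact tsum_nonneg fun i => mul_nonneg (Nat.cast_nonneg _) (ternWt_nonneg i)

lemma phiC_sub_phiC (x y : ℕ → ZMod 2) :
    phiC x - phiC y = ∑' i, ((x i).val - (y i).val : ℝ) * ternWt i := by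
  simp_rw [phiC_eq_tsum, sub_mul]
  exact ((summable_val_mul_ternWt x).tsum_sub (summable_val_mul_ternWt y)).symm

lemma abs_val_sub_val_mul_ternWt (x y : ℕ → ZMod 2) (i : ℕ) :
    |((x i).val - (y i).val : ℝ) * ternWt i| = ((x + y) i).val * ternWt i := by
  rw [abs_mul, ZMod.abs_val_sub_val_two, abs_of_nonneg (ternWt_nonneg i), Pi.add_apply]

lemma abs_phiC_sub_le_phiC_add (x y : ℕ → ZMod 2) : |phiC x - phiC y| ≤ phiC (x + y) := by
  rw [phiC_sub_phiC, phiC_eq_tsum]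
  exact tsum_of_norm_bounded (summable_val_mul_ternWt (x + y)).hasSum fun i =>
    (Real.norm_eq_abs _).trans_le (abs_val_sub_val_mul_ternWt x y i).le

lemma phiC_add_le_three_mul_abs_phiC_sub (x y : ℕ → ZMod 2) :
    phiC (x + y) ≤ 3 * |phiC x - phiC y| := by
  by_cases hxy : ∃ i, x i ≠ y i
  swap
  · obtain rfl : x = y := funext fun i => not_not.1 (not_exists.1 hxy i)
    simp [CharTwo.add_self_eq_zero, phiC_eq_tsum]
  set n := Nat.find hxy
  have hlt : ∀ i < n, x i = y i := fun i hi => not_not.1 (Nat.find_min hxy hi)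
  set t : ℕ → ℝ := fun i => ((x i).val - (y i).val : ℝ) * ternWt i
  have ht : ∀ i, |t i| ≤ ternWt i := fun i => by
    rw [abs_val_sub_val_mul_ternWt]
    exact mul_le_of_le_one_left (ternWt_nonneg i) (ZMod.val_two_le_one _)
  have htn : |t n| = ternWt n := by
    rw [abs_val_sub_val_mul_ternWt, Pi.add_apply, (ZMod.add_eq_one_iff_ne_two _ _).2
      (Nat.find_spec hxy), ZMod.val_one, Nat.cast_one, one_mul]
  have hsplit : phiC x - phiC y = t n + ∑' i, t (i + (n + 1)) := by
    rw [phiC_sub_phiC, ← (Summable.of_norm_bounded summable_ternWt ht).sum_add_tsum_nat_add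
      (n + 1), Finset.sum_range_succ,
      Finset.sum_eq_zero fun i hi => by simp [hlt i (Finset.mem_range.1 hi)], zero_add]
  have hadd : phiC (x + y) ≤ ((3 : ℝ) ^ n)⁻¹ := by
    have hvt : ∀ i, |((x + y) i).val * ternWt i| ≤ ternWt i := fun i => by
      rw [abs_of_nonneg (mul_nonneg (Nat.cast_nonneg _) (ternWt_nonneg i)),
        ← abs_val_sub_val_mul_ternWt]
      exact ht i
    rw [phiC_eq_tsum, tsum_eq_tsum_nat_add_of_eq_zero (summable_val_mul_ternWt _)
      fun i hi => by simp [hlt i hi, CharTwo.add_self_eq_zero]]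
    exact (le_abs_self _).trans (abs_tsum_nat_add_le hvt n)
  have htail := abs_tsum_nat_add_le ht (n + 1)
  have hn : ternWt n = 2 * ((3 : ℝ) ^ (n + 1))⁻¹ := rfl
  have h3 : ((3 : ℝ) ^ n)⁻¹ = 3 * ((3 : ℝ) ^ (n + 1))⁻¹ := by
    rw [pow_succ, mul_inv]; field_simp
  have hrev : |t n| ≤ |t n + ∑' i, t (i + (n + 1))| + |∑' i, t (i + (n + 1))| := by
    simpa using abs_sub (t n + ∑' i, t (i + (n + 1))) (∑' i, t (i + (n + 1)))
  rw [hsplit]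
  linarith

lemma summable_of_tsum_ofReal_ne_top {α : Type*} {f : α → ℝ} (hf : ∀ a, 0 ≤ f a)
    (h : ∑' a, ENNReal.ofReal (f a) ≠ ⊤) : Summable f :=
  (ENNReal.summable_toReal h).congr fun a => ENNReal.toReal_ofReal (hf a)

lemma ofReal_phiC (x : ℕ → ZMod 2) (j : ℕ) :
    ENNReal.ofReal (phiC x) = ∑' i, {i | x i = 1}.indicator (fun i => wt (i, j)) i := by
  rw [phiC_eq_tsum, ENNReal.ofReal_tsum_of_nonneg
    (fun i => mul_nonneg (Nat.cast_nonneg _) (ternWt_nonneg i)) (summable_val_mul_ternWt x)]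
  refine tsum_congr fun i => ?_
  rcases (x i).eq_zero_or_eq_one_two with hi | hi <;>
    simp [hi, wt_eq_ofReal_ternWt, ZMod.val_one, -ZMod.natCast_val]

lemma nrmZ_eq_tsum_ofReal_phiC (z : ℕ × ℕ → ZMod 2) :
    nrmZ z = ∑' j, ENNReal.ofReal (phiC fun i => z (i, j)) := by
  rw [nrmZ, nrmS, ENNReal.tsum_prod', ENNReal.tsum_comm]
  exact tsum_congr fun j => (ofReal_phiC _ j).symm

section Hgrp

variable (z w : ↥Hgrp)

lemma summable_abs_phiC_sub :
    Summable fun j => |phiC (fun i => (z : ℕ × ℕ → ZMod 2) (i, j)) -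
      phiC (fun i => (w : ℕ × ℕ → ZMod 2) (i, j))| := by
  have hadd :
      ∑' j, ENNReal.ofReal (phiC fun i => ((z + w : ↥Hgrp) : ℕ × ℕ → ZMod 2) (i, j)) ≠ ⊤ := by
    rw [← nrmZ_eq_tsum_ofReal_phiC]; exact (z + w).2.ne
  exact (summable_of_tsum_ofReal_ne_top (fun _ => phiC_nonneg _) hadd).of_nonneg_of_le
    (fun _ => abs_nonneg _) fun _ => abs_phiC_sub_le_phiC_add _ _

lemma ofReal_dH :
    ENNReal.ofReal (dH z w) = ∑' j, ENNReal.ofReal |phiC (fun i => (z : ℕ × ℕ → ZMod 2) (i, j)) -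
      phiC (fun i => (w : ℕ × ℕ → ZMod 2) (i, j))| :=
  ENNReal.ofReal_tsum_of_nonneg (fun _ => abs_nonneg _) (summable_abs_phiC_sub z w)

lemma ofReal_dH_le_nrmZ_add : ENNReal.ofReal (dH z w) ≤ nrmZ (z + w : ℕ × ℕ → ZMod 2) := by
  rw [ofReal_dH, nrmZ_eq_tsum_ofReal_phiC]
  exact ENNReal.tsum_le_tsum fun j => ENNReal.ofReal_le_ofReal (abs_phiC_sub_le_phiC_add _ _)

lemma nrmZ_add_le_three_mul_ofReal_dH :
    nrmZ (z + w : ℕ × ℕ → ZMod 2) ≤ 3 * ENNReal.ofReal (dH z w) := by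
  rw [ofReal_dH, nrmZ_eq_tsum_ofReal_phiC, ← ENNReal.tsum_mul_left]
  refine ENNReal.tsum_le_tsum fun j => ?_
  rw [← ENNReal.ofReal_ofNat 3, ← ENNReal.ofReal_mul (by norm_num)]
  exact ENNReal.ofReal_le_ofReal (phiC_add_le_three_mul_abs_phiC_sub _ _)

end Hgrp

section Perm

variable (g : Equiv.Perm (ℕ × ℕ))

lemma apply_mem_suppP {p : ℕ × ℕ} (hp : p ∈ suppP g) : g p ∈ suppP g :=
  fun h => hp (g.injective h)

lemma image_suppP : g '' suppP g = suppP g := by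
  refine (image_subset_iff.2 fun p => apply_mem_suppP g).antisymm fun p hp => ?_
  rw [← suppP_inv] at hp ⊢
  exact ⟨g⁻¹ p, apply_mem_suppP g⁻¹ hp, g.apply_symm_apply p⟩

lemma image_subset_union_suppP (S : Set (ℕ × ℕ)) : g '' S ⊆ S ∪ suppP g := by
  rintro _ ⟨p, hp, rfl⟩
  by_cases h : g p = p
  · exact Or.inl (by rwa [h])
  · exact Or.inr (apply_mem_suppP g h)

lemma nrmS_image_le_add_nrmS_suppP (S : Set (ℕ × ℕ)) :
    nrmS (g '' S) ≤ nrmS S + nrmS (suppP g) :=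
  (nrmS_mono (image_subset_union_suppP g S)).trans (nrmS_union_le _ _)

lemma suppZ_comp_inv (z : ℕ × ℕ → ZMod 2) : suppZ (fun p => z (g⁻¹ p)) = g '' suppZ z := by
  rw [g.image_eq_preimage_symm]
  rfl

lemma nrmZ_comp_inv_le (z : ℕ × ℕ → ZMod 2) :
    nrmZ (fun p => z (g⁻¹ p)) ≤ nrmZ z + nrmS (suppP g) := by
  rw [nrmZ, suppZ_comp_inv]
  exact nrmS_image_le_add_nrmS_suppP g _

lemma suppZ_add_comp_inv_subset (z w : ℕ × ℕ → ZMod 2) :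
    suppZ (z + fun p => w (g⁻¹ p)) ⊆ suppZ (z + w) ∪ suppP g := by
  intro p hp
  by_cases hg : g p = p
  · have : g⁻¹ p = p := Equiv.Perm.inv_eq_iff_eq.2 hg.symm
    have hp : z p + w (g⁻¹ p) = 1 := hp
    rw [this] at hp
    exact Or.inl hp
  · exact Or.inr hg

lemma nrmS_image (S : Set (ℕ × ℕ)) :
    nrmS (g '' S) = ∑' p, S.indicator (fun q => wt (g q)) p := by
  rw [nrmS, ← g.tsum_eq]
  refine tsum_congr fun p => ?_
  rw [← Set.indicator_comp_right, preimage_image_eq S g.injective]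
  rfl

lemma tsum_indicator_suppP_wt_apply :
    ∑' p, (suppP g).indicator (fun q => wt (g q)) p = nrmS (suppP g) := by
  rw [← nrmS_image, image_suppP]

lemma nrmS_image_le_add_tsum (S : Set (ℕ × ℕ)) :
    nrmS (g '' S) ≤ nrmS S + ∑' p, S.indicator ((suppP g).indicator fun q => wt (g q)) p := by
  rw [nrmS_image, nrmS, ← ENNReal.tsum_add]
  refine ENNReal.tsum_le_tsum fun p => ?_
  by_cases hp : p ∈ S
  · simp only [Set.indicator_of_mem hp]
    by_cases hg : g p = p
    · rw [hg]; exact le_self_add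
    · rw [Set.indicator_of_mem (show p ∈ suppP g from hg)]; exact le_add_self
  · simp [Set.indicator_of_notMem hp]

end Perm

lemma wt_le_nrmS {S : Set (ℕ × ℕ)} {p : ℕ × ℕ} (hp : p ∈ S) : wt p ≤ nrmS S := by
  simpa [nrmS, Set.indicator_of_mem hp] using ENNReal.le_tsum (f := S.indicator wt) p

lemma le_fst_of_nrmS_lt_wt {S : Set (ℕ × ℕ)} {M : ℕ} (h : nrmS S < wt (M, 0)) {p : ℕ × ℕ}
    (hp : p ∈ S) : M ≤ p.1 := by
  by_contra! hlt
  refine (wt_le_nrmS hp).not_gt (h.trans_le ?_)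
  exact mul_le_mul_right (ENNReal.inv_le_inv.2 (pow_le_pow_right₀ (by norm_num) (by omega))) 2

lemma exists_tsum_indicator_le_fst_lt {β : Type*} {f : ℕ × β → ℝ≥0∞} (hf : ∑' p, f p ≠ ⊤)
    {ε : ℝ≥0∞} (hε : 0 < ε) : ∃ M : ℕ, ∑' p, {p : ℕ × β | M ≤ p.1}.indicator f p < ε := by
  obtain ⟨s, hs⟩ := ((ENNReal.tendsto_tsum_compl_atTop_zero hf).eventually
    (gt_mem_nhds hε)).exists
  refine ⟨s.sup Prod.fst + 1, lt_of_le_of_lt ?_ hs⟩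
  rw [show ∑' b : {x // x ∉ s}, f b = _ from tsum_subtype {p | p ∉ s} f]
  refine ENNReal.tsum_le_tsum fun p =>
    Set.indicator_le_indicator_of_subset ?_ (fun _ => zero_le) p
  intro q (hq : s.sup Prod.fst + 1 ≤ q.1) hqs
  have := Finset.le_sup (f := Prod.fst) hqs
  omega

lemma exists_nrmS_image_le_add {g : Equiv.Perm (ℕ × ℕ)} (hg : nrmS (suppP g) ≠ ⊤) {ε : ℝ}
    (hε : 0 < ε) : ∃ η : ℝ, 0 < η ∧ ∀ S : Set (ℕ × ℕ), nrmS S < ENNReal.ofReal η →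
      nrmS (g '' S) ≤ nrmS S + ENNReal.ofReal ε := by
  obtain ⟨M, hM⟩ := exists_tsum_indicator_le_fst_lt
    ((tsum_indicator_suppP_wt_apply g).trans_ne hg) (ENNReal.ofReal_pos.2 hε)
  refine ⟨ternWt M, by rw [ternWt]; positivity, fun S hS => ?_⟩
  rw [← wt_eq_ofReal_ternWt (M, 0)] at hS
  refine (nrmS_image_le_add_tsum g S).trans (add_le_add_right (lt_of_le_of_lt ?_ hM).le _)
  exact ENNReal.tsum_le_tsum fun p => Set.indicator_le_indicator_of_subset
    (fun _ => le_fst_of_nrmS_lt_wt hS) (fun _ => zero_le) p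

noncomputable instance : DistribMulAction ↥Ggrp ↥Hgrp where
  smul := actGH
  one_smul _ := rfl
  mul_smul _ _ _ := rfl
  smul_zero _ := rfl
  smul_add _ _ _ := rfl

lemma dH_nonneg (z w : ↥Hgrp) : 0 ≤ dH z w :=
  tsum_nonneg fun _ => abs_nonneg _

lemma dG_nonneg (f g : ↥Ggrp) : 0 ≤ dG f g :=
  ENNReal.toReal_nonneg

lemma coe_actGH_add_actGH (g g₁ : ↥Ggrp) (h h₁ : ↥Hgrp) :
    ((actGH g h + actGH g₁ h₁ : ↥Hgrp) : ℕ × ℕ → ZMod 2) = fun p =>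
      ((h : ℕ × ℕ → ZMod 2) + fun q => (h₁ : ℕ × ℕ → ZMod 2)
        (((g : Equiv.Perm (ℕ × ℕ))⁻¹ * g₁)⁻¹ q)) ((g : Equiv.Perm (ℕ × ℕ))⁻¹ p) := by
  funext p
  simp [actGH, mul_inv_rev]

lemma exists_dH_actGH_lt (g : ↥Ggrp) (h : ↥Hgrp) {ε : ℝ} (hε : 0 < ε) :
    ∃ δ : ℝ, 0 < δ ∧ ∀ (g₁ : ↥Ggrp) (h₁ : ↥Hgrp), dG g g₁ < δ → dH h h₁ < δ →
      dH (actGH g h) (actGH g₁ h₁) < ε := by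
  obtain ⟨η, hη, hgη⟩ := exists_nrmS_image_le_add (g.2 : _ < ⊤).ne (half_pos hε)
  refine ⟨min η (ε / 2) / 4, by positivity, fun g₁ h₁ hg hh => ?_⟩
  set k : Equiv.Perm (ℕ × ℕ) := (g : Equiv.Perm (ℕ × ℕ))⁻¹ * g₁
  set W := suppZ ((h : ℕ × ℕ → ZMod 2) + h₁) ∪ suppP k
  have hk : nrmS (suppP k) = ENNReal.ofReal (dG g g₁) :=
    (ENNReal.ofReal_toReal ((g⁻¹ * g₁).2 : _ < ⊤).ne).symm
  have hW : nrmS W < ENNReal.ofReal (min η (ε / 2)) := calc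
    nrmS W ≤ nrmZ ((h : ℕ × ℕ → ZMod 2) + h₁) + nrmS (suppP k) := nrmS_union_le _ _
    _ ≤ 3 * ENNReal.ofReal (dH h h₁) + ENNReal.ofReal (dG g g₁) :=
        add_le_add (nrmZ_add_le_three_mul_ofReal_dH h h₁) hk.le
    _ = ENNReal.ofReal (3 * dH h h₁ + dG g g₁) := by
        rw [ENNReal.ofReal_add (mul_nonneg zero_le_three (dH_nonneg h h₁)) (dG_nonneg g g₁),
          ENNReal.ofReal_mul zero_le_three, ENNReal.ofReal_ofNat]
    _ < ENNReal.ofReal (min η (ε / 2)) :=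
        (ENNReal.ofReal_lt_ofReal_iff (by positivity)).2 (by linarith)
  have hlt : ENNReal.ofReal (dH (actGH g h) (actGH g₁ h₁)) < ENNReal.ofReal ε := calc
    _ ≤ nrmZ (actGH g h + actGH g₁ h₁ : ↥Hgrp) := ofReal_dH_le_nrmZ_add _ _
    _ ≤ nrmS (g '' W) := by
        rw [nrmZ, coe_actGH_add_actGH, suppZ_comp_inv]
        exact nrmS_mono (image_mono (suppZ_add_comp_inv_subset k _ _))
    _ ≤ nrmS W + ENNReal.ofReal (ε / 2) :=
        hgη W (hW.trans_le (ENNReal.ofReal_le_ofReal (min_le_left _ _)))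
    _ < ENNReal.ofReal (ε / 2) + ENNReal.ofReal (ε / 2) :=
        ENNReal.add_lt_add_right ENNReal.ofReal_ne_top
          (hW.trans_le (ENNReal.ofReal_le_ofReal (min_le_right _ _)))
    _ = ENNReal.ofReal ε := by rw [← ENNReal.ofReal_add (by positivity) (by positivity), add_halves]
  exact (ENNReal.ofReal_lt_ofReal_iff'.1 hlt).1

/-- For every `g ∈ G` and `h ∈ H`, the composition `h ∘ g⁻¹` belongs to
`H`, with `‖h ∘ g⁻¹‖ ≤ ‖h‖ + ‖supp g‖`; the map `(g,h) ↦ h ∘ g⁻¹` is an action of `G` on `H`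
by group automorphisms of `H`; and this action `G × H → H` is continuous with respect to the
metric `d` on `G` and the metric `d_H` on `H`. -/
theorem statement14 :
    -- `h ∘ g⁻¹ ∈ H`, with the norm bound
    (∀ (g : ↥Ggrp) (h : ↥Hgrp),
      nrmZ (fun p => (h : (ℕ × ℕ) → ZMod 2) (((g : Equiv.Perm (ℕ × ℕ)))⁻¹ p)) < ⊤ ∧
      nrmZ (fun p => (h : (ℕ × ℕ) → ZMod 2) (((g : Equiv.Perm (ℕ × ℕ)))⁻¹ p)) ≤
        nrmZ (h : (ℕ × ℕ) → ZMod 2) + nrmS (suppP (g : Equiv.Perm (ℕ × ℕ)))) ∧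
    -- `(g,h) ↦ h ∘ g⁻¹` is an action of `G` on `H` …
    (∀ h : ↥Hgrp, actGH 1 h = h) ∧
    (∀ (g₁ g₂ : ↥Ggrp) (h : ↥Hgrp), actGH (g₁ * g₂) h = actGH g₁ (actGH g₂ h)) ∧
    -- … by group automorphisms of `H`
    (∀ (g : ↥Ggrp) (h₁ h₂ : ↥Hgrp), actGH g (h₁ + h₂) = actGH g h₁ + actGH g h₂) ∧
    (∀ g : ↥Ggrp, Function.Bijective (actGH g)) ∧
    -- the action is (jointly) continuous with respect to `d` and `d_H`
    (∀ (g : ↥Ggrp) (h : ↥Hgrp), ∀ ε : ℝ, 0 < ε → ∃ δ : ℝ, 0 < δ ∧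
      ∀ (g₁ : ↥Ggrp) (h₁ : ↥Hgrp), dG g g₁ < δ → dH h h₁ < δ →
        dH (actGH g h) (actGH g₁ h₁) < ε) :=
  ⟨fun g h => ⟨(nrmZ_comp_inv_le g h).trans_lt (ENNReal.add_lt_top.2 ⟨h.2, g.2⟩),
      nrmZ_comp_inv_le g h⟩,
    one_smul ↥Ggrp, mul_smul, smul_add, MulAction.bijective,
    fun g h _ hε => exists_dH_actGH_lt g h hε⟩
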